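/- Let z ∈ ℂ with |z|² < R. Then the sequence a c_z, defined componentwise by (a c_z)(n) = √([n+1]_q) · c_z(n+1), is again square-summable, and a c_z = z • c_z as elements of ℓ²(ℕ, ℂ); that is, the q-coherent state c_z is an eigenvector of the q-boson annihilation operator with eigenvalue z. -/

import Mathlib

open scoped BigOperators

/-- The q-number `[n]_q = (1 - q^n)/(1 - q)`. -/
noncomputable def qnum (q : ℝ) (n : ℕ) : ℝ := (1 - q ^ n) / (1 - q)

/-- The q-factorial `[n]_q! = [1]_q [2]_q ⋯ [n]_q`, with `[0]_q! = 1`. -/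
noncomputable def qfact (q : ℝ) : ℕ → ℝ
  | 0 => 1
  | n + 1 => qfact q n * qnum q (n + 1)

/-- The complex q-exponential `e_q(w) = ∑ w^n/[n]_q!`. -/
noncomputable def qexC (q : ℝ) (w : ℂ) : ℂ := ∑' n : ℕ, w ^ n / (qfact q n : ℂ)

/-- The real q-exponential `e_q(x) = ∑ x^n/[n]_q!`. -/
noncomputable def qexR (q : ℝ) (x : ℝ) : ℝ := ∑' n : ℕ, x ^ n / qfact q n

/-- The normalized q-coherent state `c_z(n) = e_q(|z|²)^{-1/2} z^n / √([n]_q!)`. -/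
noncomputable def coh (q : ℝ) (z : ℂ) (n : ℕ) : ℂ :=
  (((Real.sqrt (qexR q (‖z‖ ^ 2)))⁻¹ : ℝ) : ℂ) * z ^ n / ((Real.sqrt (qfact q n) : ℝ) : ℂ)

/-- The q-boson annihilation operator on sequences: `(a c)(n) = √([n+1]_q) c(n+1)`. -/
noncomputable def annOp (q : ℝ) (c : ℕ → ℂ) : ℕ → ℂ :=
  fun n => ((Real.sqrt (qnum q (n + 1)) : ℝ) : ℂ) * c (n + 1)

/-! Since `[n+1]_q! = [n]_q! · [n+1]_q`, the factor `√[n+1]_q` produced by the annihilation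
operator cancels against `√[n+1]_q!`, leaving one factor `z`; this identity holds for every `z`.
Square-summability is the ratio test: consecutive terms of `|z|^{2n} / [n]_q!` have ratio
`|z|² / [n+1]_q → |z|² (1 - q) < 1`. -/

open Filter Topology Finset

section QNumbers

variable {q : ℝ}

lemma qnum_eq_geom_sum (hq : q ≠ 1) (n : ℕ) : qnum q n = ∑ i ∈ range n, q ^ i := by
  rw [qnum, geom_sum_eq hq, ← neg_div_neg_eq, neg_sub, neg_sub]

lemma qnum_succ_pos (hq₀ : -1 < q) (hq₁ : q ≠ 1) (n : ℕ) : 0 < qnum q (n + 1) := by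
  rw [qnum_eq_geom_sum hq₁]
  exact geom_sum_pos' (by linarith) n.succ_ne_zero

lemma qfact_pos (hq₀ : -1 < q) (hq₁ : q ≠ 1) (n : ℕ) : 0 < qfact q n := by
  induction n with
  | zero => simp [qfact]
  | succ n ih => exact mul_pos ih (qnum_succ_pos hq₀ hq₁ n)

lemma sqrt_qfact_succ (hq₀ : -1 < q) (hq₁ : q ≠ 1) (n : ℕ) :
    √(qfact q (n + 1)) = √(qfact q n) * √(qnum q (n + 1)) := by
  rw [qfact, Real.sqrt_mul (qfact_pos hq₀ hq₁ n).le]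

lemma tendsto_qnum (hq₀ : -1 < q) (hq₁ : q < 1) :
    Tendsto (qnum q) atTop (𝓝 (1 / (1 - q))) := by
  have hpow := tendsto_pow_atTop_nhds_zero_of_abs_lt_one (abs_lt.2 ⟨hq₀, hq₁⟩)
  have hlim := (hpow.const_sub 1).div_const (1 - q)
  rwa [sub_zero] at hlim

lemma summable_pow_div_qfact (hq₀ : -1 < q) (hq₁ : q < 1) {x : ℝ} (hx : |x| < 1 / (1 - q)) :
    Summable fun n ↦ x ^ n / qfact q n := by
  have hR : 0 < 1 / (1 - q) := one_div_pos.2 (sub_pos.2 hq₁)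
  have hratio : Tendsto (fun n ↦ |x| / qnum q (n + 1)) atTop (𝓝 (|x| / (1 / (1 - q)))) :=
    tendsto_const_nhds.div ((tendsto_qnum hq₀ hq₁).comp (tendsto_add_atTop_nat 1))
      hR.ne'
  obtain ⟨r, hlim, hr⟩ : ∃ r, |x| / (1 / (1 - q)) < r ∧ r < 1 :=
    exists_between ((div_lt_one hR).2 hx)
  refine summable_of_ratio_norm_eventually_le hr ?_
  filter_upwards [hratio.eventually_lt_const hlim] with n hn
  have hqfact := qfact_pos hq₀ hq₁.ne n
  have hqnum := qnum_succ_pos hq₀ hq₁.ne n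
  calc ‖x ^ (n + 1) / qfact q (n + 1)‖ = |x| / qnum q (n + 1) * ‖x ^ n / qfact q n‖ := by
        simp only [qfact, norm_div, Real.norm_eq_abs, abs_pow, abs_mul, pow_succ,
          abs_of_pos hqfact, abs_of_pos hqnum]
        field_simp
    _ ≤ r * ‖x ^ n / qfact q n‖ := by gcongr

end QNumbers

section CoherentStates

variable {q : ℝ}

lemma annOp_coh (hq₀ : -1 < q) (hq₁ : q ≠ 1) (z : ℂ) : annOp q (coh q z) = z • coh q z := by
  funext n
  have hqnum : (√(qnum q (n + 1)) : ℂ) ≠ 0 := by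
    exact_mod_cast (Real.sqrt_pos.2 (qnum_succ_pos hq₀ hq₁ n)).ne'
  simp only [annOp, coh, sqrt_qfact_succ hq₀ hq₁, pow_succ, Pi.smul_apply, smul_eq_mul]
  push_cast
  field_simp

lemma norm_coh_sq (hq₀ : -1 < q) (hq₁ : q ≠ 1) (z : ℂ) (n : ℕ) :
    ‖coh q z n‖ ^ 2 = (√(qexR q (‖z‖ ^ 2)))⁻¹ ^ 2 * ((‖z‖ ^ 2) ^ n / qfact q n) := by
  simp only [coh, norm_div, norm_mul, norm_pow, Complex.norm_real, Real.norm_eq_abs,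
    abs_of_nonneg (Real.sqrt_nonneg _), abs_inv]
  rw [div_pow, mul_pow, Real.sq_sqrt (qfact_pos hq₀ hq₁ n).le, ← pow_mul, ← pow_mul,
    mul_comm n 2, mul_div_assoc]

lemma summable_norm_coh_sq (hq₀ : -1 < q) (hq₁ : q < 1) {z : ℂ} (hz : ‖z‖ ^ 2 < 1 / (1 - q)) :
    Summable fun n ↦ ‖coh q z n‖ ^ 2 := by
  simp only [norm_coh_sq hq₀ hq₁.ne]
  exact (summable_pow_div_qfact hq₀ hq₁ (by rwa [abs_sq])).mul_left _

end CoherentStates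

/-- for `|z|² < R`, the sequence `a c_z` is square-summable and
`a c_z = z • c_z`: the q-coherent state is an eigenvector of the annihilation
operator with eigenvalue `z`. -/
theorem coherent_state_eigenvector (q : ℝ) (hq0 : 0 < q) (hq1 : q < 1) (z : ℂ)
    (hz : ‖z‖ ^ 2 < 1 / (1 - q)) :
    Summable (fun n : ℕ => ‖annOp q (coh q z) n‖ ^ 2) ∧
    annOp q (coh q z) = z • coh q z := by
  have hq : -1 < q := by linarith
  have heigen := annOp_coh hq hq1.ne z
  refine ⟨?_, heigen⟩
  simpa only [heigen, Pi.smul_apply, smul_eq_mul, norm_mul, mul_pow] using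
    (summable_norm_coh_sq hq hq1 hz).mul_left (‖z‖ ^ 2)
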